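/- arXiv:math/0011104 — 2 statements merged into one kernel-verified Lean document; each statement's English description precedes it below -/
import Mathlib

section
/- Let π_F denote the orthogonal projection of V₁ × V₂ onto F (with respect to the product inner product), let π₁ : V₁ × V₂ → V₁ be the projection onto the first factor, and define the linear endomorphism I : V₁ → V₁ by I(v) = π₁(π_F(v,0)). Then (det I)² ≥ 4^{-l} · γ^{2l}. -/
open RealInnerProductSpace

/-!
With `A = F̃* F̃`, the projection `π_F(v, 0) = (F̃ w, w)` satisfies the normal equation
`F̃* v = (1 + A) w`. Writing `w = K v`, this gives `I = F̃ K` and `A = (1 + A) K F̃`, so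
`γ = det A = det (1 + A) · det I`. Since `0 ≤ A ≤ 1`, we have `γ ≤ 1` and `det (1 + A) ≤ 2^l`,
whence `(det I)² ≥ γ² / 4^l ≥ 4^{-l} γ^{2l}`.
-/

namespace LinearMap

theorem det_comp_comm_of_finrank_eq {K V W : Type*} [Field K] [AddCommGroup V] [Module K V]
    [AddCommGroup W] [Module K W] [FiniteDimensional K V] [FiniteDimensional K W]
    (h : Module.finrank K V = Module.finrank K W) (f : V →ₗ[K] W) (g : W →ₗ[K] V) :
    (g ∘ₗ f).det = (f ∘ₗ g).det := by
  let c := Module.finBasisOfFinrankEq K V rfl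
  let b := Module.finBasisOfFinrankEq K W h.symm
  rw [← det_toMatrix c, ← det_toMatrix b, toMatrix_comp c b c, toMatrix_comp b c b,
    Matrix.det_mul_comm]

variable {E : Type*} [NormedAddCommGroup E] [InnerProductSpace ℝ E] [FiniteDimensional ℝ E]

namespace IsSymmetric

variable {T : E →ₗ[ℝ] E} {a b : ℝ}

theorem eigenvalues_mem_Icc (hT : T.IsSymmetric) (hlo : ∀ x, a * ‖x‖ ^ 2 ≤ ⟪T x, x⟫)
    (hhi : ∀ x, ⟪T x, x⟫ ≤ b * ‖x‖ ^ 2) {n : ℕ} (hn : Module.finrank ℝ E = n) (i : Fin n) :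
    hT.eigenvalues hn i ∈ Set.Icc a b := by
  let e := hT.eigenvectorBasis hn i
  have he : ‖e‖ ^ 2 = 1 := by simp [e]
  have heig : hT.eigenvalues hn i = ⟪T e, e⟫ := by
    simp [e, hT.apply_eigenvectorBasis, real_inner_smul_left]
  exact ⟨by simpa [heig, he] using hlo e, by simpa [heig, he] using hhi e⟩

theorem det_mem_Icc (hT : T.IsSymmetric) (hlo : ∀ x, a * ‖x‖ ^ 2 ≤ ⟪T x, x⟫)
    (hhi : ∀ x, ⟪T x, x⟫ ≤ b * ‖x‖ ^ 2) (ha : 0 ≤ a) :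
    T.det ∈ Set.Icc (a ^ Module.finrank ℝ E) (b ^ Module.finrank ℝ E) := by
  have h := hT.eigenvalues_mem_Icc hlo hhi rfl
  rw [hT.det_eq_prod_eigenvalues rfl]
  constructor
  · simpa using Finset.prod_le_prod (s := Finset.univ) (fun _ _ => ha) fun i _ => (h i).1
  · simpa using Finset.prod_le_prod (s := Finset.univ) (fun i _ => ha.trans (h i).1)
      fun i _ => (h i).2

end IsSymmetric

theorem adjoint_apply_eq_of_inner_sub_eq {𝕜 E F : Type*} [RCLike 𝕜]
    [NormedAddCommGroup E] [InnerProductSpace 𝕜 E] [FiniteDimensional 𝕜 E]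
    [NormedAddCommGroup F] [InnerProductSpace 𝕜 F] [FiniteDimensional 𝕜 F]
    (f : E →ₗ[𝕜] F) {v : F} {w : E} (h : ∀ u, inner 𝕜 (v - f w) (f u) = inner 𝕜 w u) :
    adjoint f v = w + adjoint f (f w) := by
  refine ext_inner_right 𝕜 fun u => ?_
  rw [inner_add_left, adjoint_inner_left, adjoint_inner_left, ← h u, inner_sub_left]
  ring

variable {F : Type*} [NormedAddCommGroup F] [InnerProductSpace ℝ F] [FiniteDimensional ℝ F]
  {f : E →ₗ[ℝ] F}

theorem inner_adjoint_comp_self_apply_self (x : E) : ⟪(adjoint f ∘ₗ f) x, x⟫ = ‖f x‖ ^ 2 := by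
  rw [comp_apply, adjoint_inner_left, real_inner_self_eq_norm_sq]

theorem det_adjoint_comp_self_mem_Icc (hf : ∀ x, ‖f x‖ ≤ ‖x‖) :
    (adjoint f ∘ₗ f).det ∈ Set.Icc (0 ^ Module.finrank ℝ E) 1 := by
  rw [← one_pow (Module.finrank ℝ E)]
  exact (isSymmetric_adjoint_comp_self f).det_mem_Icc
    (fun x => by rw [zero_mul, inner_adjoint_comp_self_apply_self]; positivity)
    (fun x => by rw [inner_adjoint_comp_self_apply_self, one_mul]; gcongr; exact hf x) le_rfl

theorem det_id_add_adjoint_comp_self_mem_Icc (hf : ∀ x, ‖f x‖ ≤ ‖x‖) :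
    (id + adjoint f ∘ₗ f).det ∈ Set.Icc 1 (2 ^ Module.finrank ℝ E) := by
  rw [← one_pow (Module.finrank ℝ E)]
  have hinner : ∀ x, ⟪(id + adjoint f ∘ₗ f : E →ₗ[ℝ] E) x, x⟫ = ‖x‖ ^ 2 + ‖f x‖ ^ 2 := fun x => by
    rw [add_apply, id_apply, inner_add_left, inner_adjoint_comp_self_apply_self,
      real_inner_self_eq_norm_sq]
  refine (IsSymmetric.id.add (isSymmetric_adjoint_comp_self f)).det_mem_Icc
    (fun x => by rw [hinner]; linarith [sq_nonneg ‖f x‖]) (fun x => ?_) zero_le_one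
  have : ‖f x‖ ^ 2 ≤ ‖x‖ ^ 2 := by gcongr; exact hf x
  rw [hinner]; linarith

/-- `K v` is the second coordinate of the orthogonal projection of `(v, 0)` onto the graph
`{(f w, w)}`: `hK` says that `(v, 0) - (f (K v), K v)` is orthogonal to every `(f u, u)`. -/
theorem det_adjoint_comp_self_eq_mul_det (h : Module.finrank ℝ E = Module.finrank ℝ F)
    (K : F →ₗ[ℝ] E) (hK : ∀ v u, ⟪v - f (K v), f u⟫ = ⟪K v, u⟫) :
    (adjoint f ∘ₗ f).det = (id + adjoint f ∘ₗ f).det * (f ∘ₗ K).det := by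
  have hadj : adjoint f = (id + adjoint f ∘ₗ f) ∘ₗ K :=
    ext fun v => adjoint_apply_eq_of_inner_sub_eq f (w := K v) (hK v)
  rw [← det_comp_comm_of_finrank_eq h, ← det_comp, ← comp_assoc, ← hadj]

end LinearMap

theorem four_zpow_neg_mul_pow_le_sq {l : ℕ} {γ D d : ℝ} (hγ₀ : 0 ^ l ≤ γ) (hγ₁ : γ ≤ 1)
    (hD₁ : 1 ≤ D) (hD₂ : D ≤ 2 ^ l) (h : γ = D * d) :
    (4 : ℝ) ^ (-(l : ℤ)) * γ ^ (2 * l) ≤ d ^ 2 := by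
  have hγ : 0 ≤ γ := (pow_nonneg le_rfl l).trans hγ₀
  have hγ_pow : γ ^ (2 * l) ≤ γ ^ 2 := by
    rcases l with _ | l
    · -- for `l = 0` the lower bound `0 ^ l ≤ γ` reads `1 ≤ γ`
      rw [pow_zero] at hγ₀ ⊢
      exact one_le_pow₀ hγ₀
    · exact pow_le_pow_of_le_one hγ hγ₁ (by omega)
  have hD_sq : D ^ 2 ≤ 4 ^ l := by
    calc D ^ 2 ≤ (2 ^ l) ^ 2 := by gcongr
      _ = 4 ^ l := by rw [← pow_mul, mul_comm, pow_mul]; norm_num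
  calc (4 : ℝ) ^ (-(l : ℤ)) * γ ^ (2 * l) ≤ (D ^ 2)⁻¹ * γ ^ 2 := by
        rw [zpow_neg, zpow_natCast]
        exact mul_le_mul (inv_anti₀ (by positivity) hD_sq) hγ_pow (by positivity) (by positivity)
    _ = d ^ 2 := by rw [h]; field_simp

theorem stmt_0_general {V₁ V₂ : Type*}
    [NormedAddCommGroup V₁] [InnerProductSpace ℝ V₁]
    [NormedAddCommGroup V₂] [InnerProductSpace ℝ V₂]
    [FiniteDimensional ℝ V₁] [FiniteDimensional ℝ V₂]
    (l : ℕ) (hl₁ : Module.finrank ℝ V₁ = l) (hl₂ : Module.finrank ℝ V₂ = l)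
    (Ft : V₂ →ₗ[ℝ] V₁)
    (F : Submodule ℝ (V₁ × V₂))
    (hF : ∀ p : V₁ × V₂, p ∈ F ↔ p.1 = Ft p.2)
    (hle : ∀ p ∈ F, ‖(p : V₁ × V₂).1‖ ≤ ‖(p : V₁ × V₂).2‖)
    (γ : ℝ) (hγ : γ = LinearMap.det ((LinearMap.adjoint Ft).comp Ft))
    -- `P` is the orthogonal projection of `V₁ × V₂` onto `F` with respect to
    -- the product inner product `⟨(v,w),(v',w')⟩ = ⟨v,v'⟩ + ⟨w,w'⟩`:
    (P : V₁ × V₂ →ₗ[ℝ] V₁ × V₂)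
    (hPmem : ∀ x, P x ∈ F)
    (hPorth : ∀ x : V₁ × V₂, ∀ p ∈ F,
      ⟪x.1 - (P x).1, (p : V₁ × V₂).1⟫ + ⟪x.2 - (P x).2, (p : V₁ × V₂).2⟫ = 0)
    (I : V₁ →ₗ[ℝ] V₁) (hI : ∀ v : V₁, I v = (P (v, 0)).1) :
    (LinearMap.det I) ^ 2 ≥ (4 : ℝ) ^ (-(l : ℤ)) * γ ^ (2 * l) := by
  subst hγ hl₂
  let K := LinearMap.snd ℝ V₁ V₂ ∘ₗ P ∘ₗ LinearMap.inl ℝ V₁ V₂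
  have hPK : ∀ v, (P (v, 0)).1 = Ft (K v) := fun v => (hF _).mp (hPmem (v, 0))
  have hIK : I = Ft ∘ₗ K := LinearMap.ext fun v => (hI v).trans (hPK v)
  have hK : ∀ v u, ⟪v - Ft (K v), Ft u⟫ = ⟪K v, u⟫ := fun v u => by
    have := hPorth (v, 0) (Ft u, u) ((hF _).mpr rfl)
    simp only [hPK, zero_sub, inner_neg_left] at this
    change _ + -⟪K v, u⟫ = 0 at this
    linarith
  have hFt : ∀ x, ‖Ft x‖ ≤ ‖x‖ := fun x => hle (Ft x, x) ((hF _).mpr rfl)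
  have hγ_eq := LinearMap.det_adjoint_comp_self_eq_mul_det hl₁.symm K hK
  obtain ⟨hγ₀, hγ₁⟩ := LinearMap.det_adjoint_comp_self_mem_Icc hFt
  obtain ⟨hD₁, hD₂⟩ := LinearMap.det_id_add_adjoint_comp_self_mem_Icc hFt
  exact four_zpow_neg_mul_pow_le_sq hγ₀ hγ₁ hD₁ hD₂ (hIK ▸ hγ_eq)

/-- Lemma 6.1(a): let `V₁, V₂` be real inner product spaces of dimension `l`,
let `F ⊂ V₁ × V₂` be the graph of a linear isomorphism `F̃ : V₂ → V₁` with
`‖v‖ ≤ ‖w‖` for all `(v,w) ∈ F`, and let `γ = det(F̃* ∘ F̃)`.  Let `P` be the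
orthogonal projection of `V₁ × V₂` onto `F` (with respect to the product inner
product), and let `I : V₁ → V₁` be `I(v) = π₁(P(v,0))`.  Then
`(det I)² ≥ 4^{-l}·γ^{2l}`. -/
theorem stmt_0 {V₁ V₂ : Type*}
    [NormedAddCommGroup V₁] [InnerProductSpace ℝ V₁]
    [NormedAddCommGroup V₂] [InnerProductSpace ℝ V₂]
    [FiniteDimensional ℝ V₁] [FiniteDimensional ℝ V₂]
    (l : ℕ) (hl₁ : Module.finrank ℝ V₁ = l) (hl₂ : Module.finrank ℝ V₂ = l)
    (Ft : V₂ →ₗ[ℝ] V₁) (hFt : Function.Bijective Ft)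
    (F : Submodule ℝ (V₁ × V₂))
    (hF : ∀ p : V₁ × V₂, p ∈ F ↔ p.1 = Ft p.2)
    (hle : ∀ p ∈ F, ‖(p : V₁ × V₂).1‖ ≤ ‖(p : V₁ × V₂).2‖)
    (γ : ℝ) (hγ : γ = LinearMap.det ((LinearMap.adjoint Ft).comp Ft))
    -- `P` is the orthogonal projection of `V₁ × V₂` onto `F` with respect to
    -- the product inner product `⟨(v,w),(v',w')⟩ = ⟨v,v'⟩ + ⟨w,w'⟩`:
    (P : V₁ × V₂ →ₗ[ℝ] V₁ × V₂)
    (hPmem : ∀ x, P x ∈ F)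
    (hPorth : ∀ x : V₁ × V₂, ∀ p ∈ F,
      ⟪x.1 - (P x).1, (p : V₁ × V₂).1⟫ + ⟪x.2 - (P x).2, (p : V₁ × V₂).2⟫ = 0)
    (I : V₁ →ₗ[ℝ] V₁) (hI : ∀ v : V₁, I v = (P (v, 0)).1) :
    (LinearMap.det I) ^ 2 ≥ (4 : ℝ) ^ (-(l : ℤ)) * γ ^ (2 * l) :=
  stmt_0_general l hl₁ hl₂ Ft F hF hle γ hγ P hPmem hPorth I hI
end

section
/- For every (v,w) ∈ F one has ‖v‖² ≥ γ · ‖w‖². -/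
/-!
Diagonalise the positive operator `T = F̃* F̃` in an orthonormal eigenbasis `(bᵢ)` with eigenvalues
`μᵢ`. Then `‖F̃ w‖² = ⟪T w, w⟫ = ∑ μᵢ ⟪bᵢ, w⟫²` and `‖w‖² = ∑ ⟪bᵢ, w⟫²`. Since `F̃` is a contraction,
every `μᵢ` lies in `[0, 1]`, so `γ = det T = ∏ μⱼ ≤ μᵢ` for each `i`, and the bound follows
termwise.
-/

open RealInnerProductSpace Finset

section

variable {E : Type*} [NormedAddCommGroup E] [InnerProductSpace ℝ E] [FiniteDimensional ℝ E]

namespace LinearMap.IsSymmetric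

variable {T : E →ₗ[ℝ] E} {n : ℕ}

theorem inner_map_self_eq_sum_eigenvalues (hT : T.IsSymmetric) (hn : Module.finrank ℝ E = n)
    (x : E) :
    ⟪T x, x⟫ = ∑ i, hT.eigenvalues hn i * ⟪hT.eigenvectorBasis hn i, x⟫ ^ 2 := by
  set b := hT.eigenvectorBasis hn
  rw [← b.sum_inner_mul_inner]
  refine sum_congr rfl fun i _ => ?_
  rw [hT x (b i), hT.apply_eigenvectorBasis, RCLike.ofReal_real_eq_id, id_eq,
    real_inner_smul_right, real_inner_comm x]
  ring

theorem eigenvalues_le_of_inner_map_self_le (hT : T.IsSymmetric) (hn : Module.finrank ℝ E = n)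
    {c : ℝ} (hc : ∀ x, ⟪T x, x⟫ ≤ c * ‖x‖ ^ 2) (i : Fin n) : hT.eigenvalues hn i ≤ c := by
  simpa [hT.apply_eigenvectorBasis, real_inner_smul_left, real_inner_self_eq_norm_sq]
    using hc (hT.eigenvectorBasis hn i)

end LinearMap.IsSymmetric

theorem Finset.prod_le_of_le_one {ι R : Type*} [Fintype ι] [CommSemiring R] [PartialOrder R]
    [IsOrderedRing R] {f : ι → R} (hf0 : ∀ i, 0 ≤ f i) (hf1 : ∀ i, f i ≤ 1) (i : ι) :
    ∏ j, f j ≤ f i := by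
  simpa using prod_le_prod_of_subset_of_le_one (singleton_subset_iff.2 (mem_univ i))
    (fun j _ => hf0 j) (fun j _ _ => hf1 j)

theorem LinearMap.IsPositive.det_mul_norm_sq_le_inner_map_self {T : E →ₗ[ℝ] E}
    (hT : T.IsPositive) (hT1 : ∀ x, ⟪T x, x⟫ ≤ ‖x‖ ^ 2) (x : E) :
    T.det * ‖x‖ ^ 2 ≤ ⟪T x, x⟫ := by
  have hS := hT.isSymmetric
  set μ := hS.eigenvalues rfl
  set b := hS.eigenvectorBasis rfl
  have hμ0 : ∀ i, 0 ≤ μ i := hT.nonneg_eigenvalues rfl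
  have hμ1 : ∀ i, μ i ≤ 1 := hS.eigenvalues_le_of_inner_map_self_le rfl (by simpa using hT1)
  rw [hS.det_eq_prod_eigenvalues rfl, hS.inner_map_self_eq_sum_eigenvalues rfl,
    ← b.sum_sq_inner_right, mul_sum]
  exact sum_le_sum fun i _ =>
    mul_le_mul_of_nonneg_right (prod_le_of_le_one hμ0 hμ1 i) (sq_nonneg _)

theorem LinearMap.det_adjoint_comp_self_mul_norm_sq_le {F : Type*} [NormedAddCommGroup F]
    [InnerProductSpace ℝ F] [FiniteDimensional ℝ F] (A : E →ₗ[ℝ] F) (hA : ∀ x, ‖A x‖ ≤ ‖x‖)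
    (x : E) : (A.adjoint ∘ₗ A).det * ‖x‖ ^ 2 ≤ ‖A x‖ ^ 2 := by
  have hquad : ∀ y, ⟪(A.adjoint ∘ₗ A) y, y⟫ = ‖A y‖ ^ 2 := fun y => by
    rw [comp_apply, adjoint_inner_left, real_inner_self_eq_norm_sq]
  rw [← hquad]
  refine A.isPositive_adjoint_comp_self.det_mul_norm_sq_le_inner_map_self (fun y => ?_) x
  rw [hquad]
  exact pow_le_pow_left₀ (norm_nonneg _) (hA y) 2

end

theorem stmt_2_general {V₁ V₂ : Type*}
    [NormedAddCommGroup V₁] [InnerProductSpace ℝ V₁]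
    [NormedAddCommGroup V₂] [InnerProductSpace ℝ V₂]
    [FiniteDimensional ℝ V₁] [FiniteDimensional ℝ V₂]
    (Ft : V₂ →ₗ[ℝ] V₁)
    (F : Submodule ℝ (V₁ × V₂))
    (hF : ∀ p : V₁ × V₂, p ∈ F ↔ p.1 = Ft p.2)
    (hle : ∀ p ∈ F, ‖(p : V₁ × V₂).1‖ ≤ ‖(p : V₁ × V₂).2‖)
    (γ : ℝ) (hγ : γ = LinearMap.det ((LinearMap.adjoint Ft).comp Ft)) :
    ∀ p ∈ F, ‖(p : V₁ × V₂).1‖ ^ 2 ≥ γ * ‖(p : V₁ × V₂).2‖ ^ 2 := by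
  have hcontr : ∀ w, ‖Ft w‖ ≤ ‖w‖ := fun w => hle (Ft w, w) ((hF _).2 rfl)
  intro p hp
  rw [(hF p).1 hp, hγ]
  exact Ft.det_adjoint_comp_self_mul_norm_sq_le hcontr p.2

/-- Let `V₁, V₂` be real inner product spaces of dimension `l`, let `F` be the
graph of a linear isomorphism `F̃ : V₂ → V₁` with `‖v‖ ≤ ‖w‖` for all
`(v,w) ∈ F`, and let `γ = det(F̃* ∘ F̃)`.  Then `‖v‖² ≥ γ·‖w‖²` for every
`(v,w) ∈ F`. -/
theorem stmt_2 {V₁ V₂ : Type*}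
    [NormedAddCommGroup V₁] [InnerProductSpace ℝ V₁]
    [NormedAddCommGroup V₂] [InnerProductSpace ℝ V₂]
    [FiniteDimensional ℝ V₁] [FiniteDimensional ℝ V₂]
    (l : ℕ) (hl₁ : Module.finrank ℝ V₁ = l) (hl₂ : Module.finrank ℝ V₂ = l)
    (Ft : V₂ →ₗ[ℝ] V₁) (hFt : Function.Bijective Ft)
    (F : Submodule ℝ (V₁ × V₂))
    (hF : ∀ p : V₁ × V₂, p ∈ F ↔ p.1 = Ft p.2)
    (hle : ∀ p ∈ F, ‖(p : V₁ × V₂).1‖ ≤ ‖(p : V₁ × V₂).2‖)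
    (γ : ℝ) (hγ : γ = LinearMap.det ((LinearMap.adjoint Ft).comp Ft)) :
    ∀ p ∈ F, ‖(p : V₁ × V₂).1‖ ^ 2 ≥ γ * ‖(p : V₁ × V₂).2‖ ^ 2 :=
  stmt_2_general Ft F hF hle γ hγ
end
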